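/- arXiv:2504.14030 — 3 statements merged into one kernel-verified Lean document; each statement's English description precedes it below -/
import Mathlib

section
/- The number of semistandard Young tableaux of shape λ (a partition with at most n parts) with entries in {1,...,n} equals the dimension of the irreducible polynomial representation of GL_n(ℂ) with highest weight λ, as computed by the Weyl dimension formula ∏_{1≤i<j≤n} (λ_i - λ_j + j - i)/(j - i). -/
/-!
Removing the cells that carry the largest letter from a semistandard tableau of shape `λ`
leaves a semistandard tableau with smaller entries whose shape `μ` interlaces `λ`
(`λ_{i+1} ≤ μ_i ≤ λ_i`, and the last row is gone), so the number of tableaux satisfies the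
branching rule `#SSYT(λ) = ∑_{μ ≺ λ} #SSYT(μ)`.

The Weyl product is the Vandermonde determinant `V(i - λ_i)` and its denominator is
`V(i) = sf(n - 1)`. Summing over the interlacing `μ` is summing `d_i = i - μ_i` over the box
`∏ [c_i, c_{i+1})` with `c_i = i - λ_i`, and the discrete integration identity
`(n - 1)! ∑_d V(d) = V(c)` closes the induction.
-/

open Finset Matrix Polynomial
open scoped Nat

theorem Int.sum_Ico_sub {M : Type*} [AddCommGroup M] (f : ℤ → M) {a b : ℤ} (hab : a ≤ b) :
    ∑ t ∈ Ico a b, (f (t + 1) - f t) = f b - f a := by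
  induction b, hab using Int.leInduction with
  | base => simp
  | succ b hab ih =>
    rw [← insert_Ico_right_eq_Ico_add_one hab, sum_insert right_notMem_Ico, ih]
    abel

theorem descPochhammer_eval_add_one_sub {R : Type*} [CommRing R] (j : ℕ) (t : R) :
    (descPochhammer R (j + 1)).eval (t + 1) - (descPochhammer R (j + 1)).eval t =
      (j + 1) * (descPochhammer R j).eval t := by
  have hshift :
      (descPochhammer R (j + 1)).eval (t + 1) = (t + 1) * (descPochhammer R j).eval t := by
    simp [descPochhammer_succ_left]
  rw [hshift, descPochhammer_succ_eval]
  ring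

theorem Finset.prod_filter_lt_eq_prod_prod_Ioi {ι M : Type*} [Fintype ι] [LinearOrder ι]
    [LocallyFiniteOrderTop ι] [CommMonoid M] (f : ι → ι → M) :
    ∏ p ∈ univ.filter (fun p : ι × ι => p.1 < p.2), f p.1 p.2 =
      ∏ i, ∏ j ∈ Ioi i, f i j := by
  rw [prod_filter, ← univ_product_univ, prod_product]
  refine prod_congr rfl fun i _ => ?_
  rw [← prod_filter]
  congr 1
  ext j
  simp

namespace Matrix

variable {R : Type*} [CommRing R]

theorem det_of_sum_rows {n ι : Type*} [Fintype n] [DecidableEq n] (s : n → Finset ι)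
    (f : ι → n → R) :
    (of fun i j => ∑ t ∈ s i, f t j).det =
      ∑ d ∈ Fintype.piFinset s, (of fun i j => f (d i) j).det := by
  have h := (detRowAlternating : (n → R) [⋀^n]→ₗ[R] R).toMultilinearMap.map_sum_finset
    (fun _ t => f t) s
  have hrows : (of fun i j => ∑ t ∈ s i, f t j) = fun i => ∑ t ∈ s i, f t := by
    ext i j
    simp [Finset.sum_apply]
  rw [hrows]
  exact h

theorem det_eq_det_sub_rows_of_col_zero_eq_one {m : ℕ}
    (M : Matrix (Fin (m + 1)) (Fin (m + 1)) R) (h : ∀ i, M i 0 = 1) :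
    M.det = (of fun i j : Fin m => M i.succ j.succ - M i.castSucc j.succ).det := by
  let B : Matrix (Fin (m + 1)) (Fin (m + 1)) R :=
    of fun i => Fin.cases (M 0) (fun i' j => M i'.succ j - M i'.castSucc j) i
  have hB : M.det = B.det :=
    det_eq_of_forall_row_eq_smul_add_pred (fun _ => 1) (fun _ => rfl) (fun i j => by simp [B])
  rw [hB, det_succ_column_zero, Fin.sum_univ_succ]
  simp [B, h, Matrix.submatrix]

/-- Writing `V(c)` with the falling factorials `(X)_j` as columns, consecutive row differences are
telescoping sums of `(X + 1)_{j+1} - (X)_{j+1} = (j + 1) (X)_j`, and multilinearity in the rows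
distributes these sums. -/
theorem factorial_mul_sum_det_vandermonde_Ico {m : ℕ} (c : Fin (m + 1) → ℤ)
    (hc : ∀ i : Fin m, c i.castSucc ≤ c i.succ) :
    (m ! : ℤ) * ∑ d ∈ Fintype.piFinset (fun i : Fin m => Ico (c i.castSucc) (c i.succ)),
      (vandermonde d).det = (vandermonde c).det := by
  have hV : ∀ {k : ℕ} (v : Fin k → ℤ),
      (vandermonde v).det = (of fun i j : Fin k => (descPochhammer ℤ j).eval (v i)).det :=
    fun v => det_eval_matrixOfPolynomials_eq_det_vandermonde v _
      (fun j => descPochhammer_natDegree ℤ j) (fun j => monic_descPochhammer ℤ j)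
  have hfact : ∏ j : Fin m, ((j : ℤ) + 1) = m ! := by
    rw [Fin.prod_univ_eq_prod_range (fun j => (j : ℤ) + 1), ← prod_range_add_one_eq_factorial]
    push_cast; rfl
  calc (m ! : ℤ) * ∑ d ∈ Fintype.piFinset (fun i : Fin m => Ico (c i.castSucc) (c i.succ)),
        (vandermonde d).det
      = (∏ j : Fin m, ((j : ℤ) + 1)) * (of fun i j : Fin m =>
          ∑ t ∈ Ico (c i.castSucc) (c i.succ), (descPochhammer ℤ j).eval t).det := by
        simp only [hfact, det_of_sum_rows, hV]
    _ = (of fun i j : Fin m => (descPochhammer ℤ (j + 1)).eval (c i.succ) -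
          (descPochhammer ℤ (j + 1)).eval (c i.castSucc)).det := by
        rw [← det_mul_row]
        congr with i j
        rw [of_apply, ← Int.sum_Ico_sub (fun t => (descPochhammer ℤ (j + 1)).eval t) (hc i),
          mul_sum]
        simp only [descPochhammer_eval_add_one_sub]
    _ = (vandermonde c).det := by
        rw [hV, det_eq_det_sub_rows_of_col_zero_eq_one] <;> simp

theorem det_vandermonde_id_succ (n : ℕ) :
    (vandermonde fun i : Fin (n + 1) => (i : ℤ)).det =
      n ! * (vandermonde fun i : Fin n => (i : ℤ)).det := by
  cases n with
  | zero => simp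
  | succ n =>
    rw [det_vandermonde_id_eq_superFactorial, det_vandermonde_id_eq_superFactorial,
      Nat.superFactorial_succ]
    push_cast
    ring

end Matrix

abbrev Cell (n : ℕ) (lam : Fin n → ℕ) := {p : Fin n × ℕ // p.2 < lam p.1}

abbrev SSYT (n : ℕ) (lam : Fin n → ℕ) :=
  {T : Cell n lam → Fin n //
    (∀ p q : Cell n lam, p.1.1 = q.1.1 → p.1.2 ≤ q.1.2 → T p ≤ T q) ∧
    (∀ p q : Cell n lam, p.1.2 = q.1.2 → p.1.1 < q.1.1 → T p < T q)}

instance (n : ℕ) (lam : Fin n → ℕ) : Finite (Cell n lam) :=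
  Finite.of_injective (fun c => (⟨c.1.1, c.1.2, c.2⟩ : Σ i, Fin (lam i))) <| by
    rintro ⟨⟨i, j⟩, _⟩ ⟨⟨i', j'⟩, _⟩ h
    simp only [Sigma.mk.injEq] at h
    obtain ⟨rfl, h⟩ := h
    simp_all

section Pad

variable {α : Type*} {n : ℕ} {lam : Fin n → ℕ}

def padRows (f : Cell n lam → α) (a : α) (i : Fin n) (j : ℕ) : α :=
  if h : j < lam i then f ⟨(i, j), h⟩ else a

theorem padRows_of_lt (f : Cell n lam → α) (a : α) {i : Fin n} {j : ℕ} (h : j < lam i) :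
    padRows f a i j = f ⟨(i, j), h⟩ :=
  dif_pos h

theorem padRows_of_le (f : Cell n lam → α) (a : α) {i : Fin n} {j : ℕ} (h : lam i ≤ j) :
    padRows f a i j = a :=
  dif_neg h.not_gt

theorem padRows_monotone [Preorder α] {f : Cell n lam → α}
    (hf : ∀ p q : Cell n lam, p.1.1 = q.1.1 → p.1.2 ≤ q.1.2 → f p ≤ f q) {a : α}
    (ha : ∀ c, f c ≤ a) (i : Fin n) : Monotone (padRows f a i) := by
  intro j j' hjj'
  unfold padRows
  split_ifs with h h'
  · exact hf _ _ rfl hjj'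
  · exact ha _
  · omega
  · exact le_rfl

end Pad

namespace SSYT

variable {n : ℕ}

theorem row_le_entry {lam : Fin n → ℕ} (hlam : Antitone lam) (T : SSYT n lam)
    (c : Cell n lam) : (c.1.1 : ℕ) ≤ T.1 c := by
  obtain ⟨⟨i, j⟩, hc⟩ := c
  rcases n with _ | n
  · exact i.elim0
  induction i using Fin.induction with
  | zero => exact Nat.zero_le _
  | succ i ih =>
    have hcell : j < lam i.castSucc := hc.trans_le (hlam (Fin.castSucc_le_succ i))
    have hlt := T.2.2 ⟨(i.castSucc, j), hcell⟩ ⟨(i.succ, j), hc⟩ rfl i.castSucc_lt_succ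
    have := ih hcell
    simp only [Fin.val_castSucc, Fin.val_succ, Fin.lt_def] at this hlt ⊢
    omega

section Shape

variable {lam : Fin (n + 1) → ℕ}

theorem padRows_last_monotone (T : SSYT (n + 1) lam) (i : Fin (n + 1)) :
    Monotone (padRows T.1 (Fin.last n) i) :=
  padRows_monotone T.2.1 (fun _ => Fin.le_last _) i

/-- Row lengths of the tableau obtained by deleting the cells that carry the largest letter. -/
def shape (T : SSYT (n + 1) lam) (i : Fin n) : ℕ :=
  Nat.find (⟨lam i.castSucc, padRows_of_le _ _ le_rfl⟩ :
    ∃ j, padRows T.1 (Fin.last n) i.castSucc j = Fin.last n)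

theorem padRows_eq_last_iff (T : SSYT (n + 1) lam) (i : Fin n) (j : ℕ) :
    padRows T.1 (Fin.last n) i.castSucc j = Fin.last n ↔ T.shape i ≤ j := by
  refine ⟨fun h => Nat.find_min' _ h, fun h => le_antisymm (Fin.le_last _) ?_⟩
  exact (Nat.find_spec (p := fun j => padRows T.1 (Fin.last n) i.castSucc j = Fin.last n)
    _).ge.trans (T.padRows_last_monotone _ h)

theorem shape_le (T : SSYT (n + 1) lam) (i : Fin n) : T.shape i ≤ lam i.castSucc :=
  Nat.find_min' _ (padRows_of_le _ _ le_rfl)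

theorem le_shape (hlam : Antitone lam) (T : SSYT (n + 1) lam) (i : Fin n) :
    lam i.succ ≤ T.shape i := by
  by_contra! h
  have hcell : T.shape i < lam i.castSucc := h.trans_le (hlam (Fin.castSucc_le_succ i))
  have hlast := (T.padRows_eq_last_iff i _).2 le_rfl
  rw [padRows_of_lt _ _ hcell] at hlast
  have hlt := T.2.2 ⟨(i.castSucc, T.shape i), hcell⟩ ⟨(i.succ, T.shape i), h⟩ rfl
    i.castSucc_lt_succ
  exact (Fin.le_last _).not_gt (hlast ▸ hlt)

theorem entry_ne_last (T : SSYT (n + 1) lam) {i : Fin n} {j : ℕ} (hj : j < T.shape i) :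
    T.1 ⟨(i.castSucc, j), hj.trans_le (T.shape_le i)⟩ ≠ Fin.last n := by
  rw [← padRows_of_lt T.1 (Fin.last n), Ne, padRows_eq_last_iff]
  exact hj.not_ge

def restrict (T : SSYT (n + 1) lam) : SSYT n T.shape :=
  ⟨fun c => (T.1 ⟨(c.1.1.castSucc, c.1.2), c.2.trans_le (T.shape_le _)⟩).castPred
      (T.entry_ne_last c.2),
    fun p q hi hj => by
      rw [Fin.castPred_le_castPred_iff]
      exact T.2.1 _ _ (by simp [hi]) hj,
    fun p q hj hi => by
      rw [Fin.castPred_lt_castPred_iff]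
      exact T.2.2 _ _ hj (Fin.castSucc_lt_castSucc_iff.2 hi)⟩

end Shape

section Extend

variable {lam : Fin (n + 1) → ℕ} {μ : Fin n → ℕ}

theorem padRows_castSucc_lt (T : SSYT n μ) {i i' : Fin n} {j : ℕ} (hj : j < μ i)
    (hii' : i < i') :
    (T.1 ⟨(i, j), hj⟩).castSucc < padRows (Fin.castSucc ∘ T.1) (Fin.last n) i' j := by
  unfold padRows
  split_ifs with h
  · exact Fin.castSucc_lt_castSucc_iff.2 (T.2.2 _ _ rfl hii')
  · exact Fin.castSucc_lt_last _

def extendFun (T : SSYT n μ) (c : Cell (n + 1) lam) : Fin (n + 1) :=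
  Fin.lastCases (Fin.last n) (fun i => padRows (Fin.castSucc ∘ T.1) (Fin.last n) i c.1.2) c.1.1

theorem extendFun_castSucc (T : SSYT n μ) {i : Fin n} {j : ℕ} (h : j < lam i.castSucc) :
    extendFun T ⟨(i.castSucc, j), h⟩ = padRows (Fin.castSucc ∘ T.1) (Fin.last n) i j :=
  Fin.lastCases_castSucc _

theorem extendFun_last (T : SSYT n μ) {j : ℕ} (h : j < lam (Fin.last n)) :
    extendFun T ⟨(Fin.last n, j), h⟩ = Fin.last n :=
  Fin.lastCases_last

theorem extendFun_row_mono (T : SSYT n μ) (p q : Cell (n + 1) lam) (hi : p.1.1 = q.1.1)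
    (hj : p.1.2 ≤ q.1.2) : extendFun T p ≤ extendFun T q := by
  obtain ⟨⟨r, j⟩, hp⟩ := p
  obtain ⟨⟨r', j'⟩, hq⟩ := q
  obtain rfl : r = r' := hi
  obtain ⟨i, rfl⟩ | rfl := Fin.eq_castSucc_or_eq_last r
  · rw [extendFun_castSucc, extendFun_castSucc]
    refine padRows_monotone (fun p q hi hj => ?_) (fun _ => (Fin.castSucc_lt_last _).le) i
      hj
    exact Fin.castSucc_le_castSucc_iff.2 (T.2.1 p q hi hj)
  · rw [extendFun_last, extendFun_last]

theorem extendFun_col_strict (hlam : Antitone lam) (hμ : ∀ i, lam i.succ ≤ μ i)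
    (T : SSYT n μ) (p q : Cell (n + 1) lam) (hj : p.1.2 = q.1.2) (hi : p.1.1 < q.1.1) :
    extendFun T p < extendFun T q := by
  obtain ⟨⟨r, j⟩, hp⟩ := p
  obtain ⟨⟨r', j'⟩, hq⟩ := q
  obtain rfl : j = j' := hj
  change r < r' at hi
  obtain ⟨i, rfl⟩ | rfl := Fin.eq_castSucc_or_eq_last r
  · have hcell : j < μ i :=
      hq.trans_le ((hlam (Fin.castSucc_lt_iff_succ_le.1 hi)).trans (hμ i))
    rw [extendFun_castSucc, padRows_of_lt _ _ hcell]
    obtain ⟨i', rfl⟩ | rfl := Fin.eq_castSucc_or_eq_last r'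
    · rw [extendFun_castSucc]
      exact T.padRows_castSucc_lt hcell (Fin.castSucc_lt_castSucc_iff.1 hi)
    · rw [extendFun_last]
      exact Fin.castSucc_lt_last _
  · exact absurd hi (Fin.le_last r').not_gt

def extend (hlam : Antitone lam) (hμ : ∀ i, lam i.succ ≤ μ i) (T : SSYT n μ) :
    SSYT (n + 1) lam :=
  ⟨extendFun T, extendFun_row_mono T, extendFun_col_strict hlam hμ T⟩

theorem coe_extend (hlam : Antitone lam) (hμ : ∀ i, lam i.succ ≤ μ i) (T : SSYT n μ) :
    (extend hlam hμ T).1 = extendFun T :=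
  rfl

theorem extend_apply_castSucc (hlam : Antitone lam) (hμ : ∀ i, lam i.succ ≤ μ i)
    (T : SSYT n μ) {i : Fin n} {j : ℕ} (hj : j < μ i) (h : j < lam i.castSucc) :
    (extend hlam hμ T).1 ⟨(i.castSucc, j), h⟩ = (T.1 ⟨(i, j), hj⟩).castSucc := by
  rw [coe_extend, extendFun_castSucc, padRows_of_lt _ _ hj, Function.comp_apply]

theorem extend_injective (hlam : Antitone lam) (hμ : ∀ i, lam i.succ ≤ μ i)
    (hμ' : ∀ i, μ i ≤ lam i.castSucc) : Function.Injective (extend hlam hμ) := by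
  intro T T' h
  refine Subtype.ext (funext fun c => Fin.castSucc_injective _ ?_)
  have hc : c.1.2 < lam c.1.1.castSucc := c.2.trans_le (hμ' _)
  rw [← extend_apply_castSucc hlam hμ T c.2 hc, ← extend_apply_castSucc hlam hμ T' c.2 hc, h]

theorem padRows_castSucc_eq_last_iff (T : SSYT n μ) (i : Fin n) (j : ℕ) :
    padRows (Fin.castSucc ∘ T.1) (Fin.last n) i j = Fin.last n ↔ μ i ≤ j := by
  by_cases h : j < μ i
  · rw [padRows_of_lt _ _ h]
    exact iff_of_false (Fin.castSucc_lt_last _).ne h.not_ge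
  · rw [padRows_of_le _ _ (not_lt.1 h)]
    exact iff_of_true rfl (not_lt.1 h)

theorem shape_extend (hlam : Antitone lam) (hμ : ∀ i, lam i.succ ≤ μ i)
    (hμ' : ∀ i, μ i ≤ lam i.castSucc) (T : SSYT n μ) : (extend hlam hμ T).shape = μ := by
  funext i
  refine eq_of_forall_ge_iff fun j => ?_
  rw [← padRows_eq_last_iff, ← padRows_castSucc_eq_last_iff T]
  by_cases h : j < lam i.castSucc
  · rw [padRows_of_lt _ _ h, coe_extend, extendFun_castSucc]
  · rw [padRows_of_le _ _ (not_lt.1 h), padRows_of_le _ _ ((hμ' i).trans (not_lt.1 h))]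

theorem extend_restrict (hlam : Antitone lam) (T : SSYT (n + 1) lam) :
    extend hlam (T.le_shape hlam) T.restrict = T := by
  refine Subtype.ext (funext fun ⟨⟨r, j⟩, hc⟩ => ?_)
  obtain ⟨i, rfl⟩ | rfl := Fin.eq_castSucc_or_eq_last r
  · by_cases h : j < T.shape i
    · rw [extend_apply_castSucc hlam _ _ h]
      exact Fin.castSucc_castPred _ (T.entry_ne_last h)
    · have hlast := (T.padRows_eq_last_iff i j).2 (not_lt.1 h)
      rw [padRows_of_lt _ _ hc] at hlast
      rw [hlast, coe_extend, extendFun_castSucc, padRows_of_le _ _ (not_lt.1 h)]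
  · rw [coe_extend, extendFun_last]
    exact (Fin.last_le_iff.1 (T.row_le_entry hlam ⟨(Fin.last n, j), hc⟩)).symm

end Extend

def interlacingShapes (lam : Fin (n + 1) → ℕ) : Finset (Fin n → ℕ) :=
  Fintype.piFinset fun i => Icc (lam i.succ) (lam i.castSucc)

theorem mem_interlacingShapes {lam : Fin (n + 1) → ℕ} {μ : Fin n → ℕ} :
    μ ∈ interlacingShapes lam ↔ ∀ i, lam i.succ ≤ μ i ∧ μ i ≤ lam i.castSucc := by
  simp [interlacingShapes]

theorem card_succ {lam : Fin (n + 1) → ℕ} (hlam : Antitone lam) :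
    Nat.card (SSYT (n + 1) lam) = ∑ μ ∈ interlacingShapes lam, Nat.card (SSYT n μ) := by
  let F : (Σ μ : interlacingShapes lam, SSYT n μ) → SSYT (n + 1) lam :=
    fun T => extend hlam (fun i => (mem_interlacingShapes.1 T.1.2 i).1) T.2
  have hF : F.Bijective := by
    constructor
    · rintro ⟨⟨μ, hμ⟩, T⟩ ⟨⟨μ', hμ'⟩, T'⟩ h
      have hbounds := mem_interlacingShapes.1 hμ
      have hbounds' := mem_interlacingShapes.1 hμ'
      obtain rfl : μ = μ' := by
        rw [← shape_extend hlam (fun i => (hbounds i).1) (fun i => (hbounds i).2) T,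
          ← shape_extend hlam (fun i => (hbounds' i).1) (fun i => (hbounds' i).2) T']
        exact congrArg SSYT.shape h
      obtain rfl := extend_injective hlam (fun i => (hbounds i).1) (fun i => (hbounds i).2) h
      rfl
    · intro T
      have hshape := mem_interlacingShapes.2 fun i => ⟨T.le_shape hlam i, T.shape_le i⟩
      exact ⟨⟨⟨T.shape, hshape⟩, T.restrict⟩, T.extend_restrict hlam⟩
  rw [← Nat.card_eq_of_bijective F hF, Nat.card_sigma,
    sum_coe_sort (interlacingShapes lam) (fun μ => Nat.card (SSYT n μ))]

theorem antitone_of_mem_interlacingShapes {lam : Fin (n + 1) → ℕ} (hlam : Antitone lam)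
    {μ : Fin n → ℕ} (hμ : μ ∈ interlacingShapes lam) : Antitone μ := by
  intro a b hab
  obtain rfl | hab := hab.eq_or_lt
  · exact le_rfl
  have h := mem_interlacingShapes.1 hμ
  exact (h b).2.trans ((hlam (Fin.castSucc_lt_iff_succ_le.1
    (Fin.castSucc_lt_castSucc_iff.2 hab))).trans (h a).1)

theorem sum_interlacingShapes_eq_sum_Ico {M : Type*} [AddCommMonoid M] (lam : Fin (n + 1) → ℕ)
    (f : (Fin n → ℤ) → M) :
    ∑ μ ∈ interlacingShapes lam, f (fun i => (i : ℤ) - μ i) =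
      ∑ d ∈ Fintype.piFinset (fun i : Fin n =>
        Ico ((i.castSucc : ℤ) - lam i.castSucc) ((i.succ : ℤ) - lam i.succ)), f d := by
  refine sum_nbij' (fun μ i => (i : ℤ) - μ i) (fun d i => ((i : ℤ) - d i).toNat) ?_ ?_ ?_ ?_
    (fun _ _ => rfl)
  · intro μ hμ
    simp only [mem_interlacingShapes] at hμ
    simp only [Fintype.mem_piFinset, mem_Ico, Fin.val_castSucc, Fin.val_succ]
    intro i
    have := hμ i
    omega
  · intro d hd
    simp only [Fintype.mem_piFinset, mem_Ico, Fin.val_castSucc, Fin.val_succ] at hd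
    simp only [mem_interlacingShapes]
    intro i
    have := hd i
    omega
  · intro μ _
    funext i
    dsimp only
    omega
  · intro d hd
    simp only [Fintype.mem_piFinset, mem_Ico, Fin.val_castSucc, Fin.val_succ] at hd
    funext i
    dsimp only
    have := hd i
    omega

theorem card_mul_det_vandermonde {lam : Fin n → ℕ} (hlam : Antitone lam) :
    (Nat.card (SSYT n lam) : ℤ) * (vandermonde fun i : Fin n => (i : ℤ)).det =
      (vandermonde fun i => (i : ℤ) - lam i).det := by
  induction n with
  | zero => simp
  | succ n ih =>
    have hc : ∀ i : Fin n,
        (i.castSucc : ℤ) - lam i.castSucc ≤ (i.succ : ℤ) - lam i.succ := by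
      intro i
      have := hlam (Fin.castSucc_le_succ i)
      simp only [Fin.val_castSucc, Fin.val_succ]
      omega
    rw [← factorial_mul_sum_det_vandermonde_Ico (fun i => (i : ℤ) - lam i) hc, card_succ hlam,
      det_vandermonde_id_succ, ← sum_interlacingShapes_eq_sum_Ico, Nat.cast_sum, sum_mul,
      mul_sum]
    refine sum_congr rfl fun μ hμ => ?_
    rw [← ih (antitone_of_mem_interlacingShapes hlam hμ)]
    ring

end SSYT

/-- The number of semistandard Young tableaux of shape `λ` (a partition with at most `n`
parts, given as an antitone function `lam : Fin n → ℕ`) with entries in `{1,…,n}`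
(modelled as `Fin n`) equals the dimension of the irreducible polynomial representation
of `GL_n(ℂ)` with highest weight `λ`, given by the Weyl dimension formula
`∏_{i<j} (λ_i - λ_j + j - i)/(j - i)`; stated in cross-multiplied form over `ℚ`. -/
theorem ssyt_count_eq_weyl_dim (n : ℕ) (lam : Fin n → ℕ) (hlam : Antitone lam) :
    (Nat.card {T : {p : Fin n × ℕ // p.2 < lam p.1} → Fin n //
        (∀ p q : {p : Fin n × ℕ // p.2 < lam p.1},
          p.1.1 = q.1.1 → p.1.2 ≤ q.1.2 → T p ≤ T q) ∧
        (∀ p q : {p : Fin n × ℕ // p.2 < lam p.1},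
          p.1.2 = q.1.2 → p.1.1 < q.1.1 → T p < T q)} : ℚ) *
      ∏ p ∈ Finset.univ.filter (fun p : Fin n × Fin n => p.1 < p.2),
        ((p.2 : ℚ) - (p.1 : ℚ)) =
    ∏ p ∈ Finset.univ.filter (fun p : Fin n × Fin n => p.1 < p.2),
        ((lam p.1 : ℚ) - (lam p.2 : ℚ) + (p.2 : ℚ) - (p.1 : ℚ)) := by
  have h := congrArg ((↑) : ℤ → ℚ) (SSYT.card_mul_det_vandermonde hlam)
  rw [det_vandermonde, det_vandermonde] at h
  push_cast at h
  rw [prod_filter_lt_eq_prod_prod_Ioi (fun i j : Fin n => (j : ℚ) - i),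
    prod_filter_lt_eq_prod_prod_Ioi (fun i j : Fin n => (lam i : ℚ) - lam j + j - i)]
  exact h.trans (prod_congr rfl fun i _ => prod_congr rfl fun j _ => by ring)
end

section
/- The number of symplectic tableaux of shape λ with a single column of length k ≤ n on the alphabet {1 < 1̄ < ... < n < n̄} (strictly increasing entries with the i-th entry ≥ i) equals C(2n, k) − C(2n, k−2), the dimension of the k-th fundamental representation of Sp_{2n}(ℂ). -/
open Finset

/-- A finset of naturals is "good" if each element `x` is at least twice the number
of elements below it (the single-column symplectic condition on the set of entries). -/
private def Good (S : Finset ℕ) : Prop := ∀ x ∈ S, 2 * (S.filter (· < x)).card ≤ x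

private instance : DecidablePred Good := fun _ => by unfold Good; infer_instance

/-- Number of good `k`-subsets of `{0, …, m-1}`. -/
private def scount (m k : ℕ) : ℕ := (((Finset.range m).powersetCard k).filter Good).card

private lemma good_of_card_le_one {S : Finset ℕ} (h : S.card ≤ 1) : Good S := by
  intro x hx
  have he : S.filter (· < x) = ∅ := by
    apply Finset.eq_empty_of_forall_notMem
    intro y hy
    rw [Finset.mem_filter] at hy
    have := Finset.card_le_one.mp h y hy.1 x hx
    omega
  simp [he]

private lemma scount_of_le_one {m k : ℕ} (hk : k ≤ 1) : scount m k = Nat.choose m k := by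
  unfold scount
  rw [Finset.filter_eq_self.mpr, Finset.card_powersetCard, Finset.card_range]
  intro S hS
  rw [Finset.mem_powersetCard] at hS
  exact good_of_card_le_one (hS.2 ▸ hk)

private lemma scount_eq_zero {m k : ℕ} (h : m + 2 ≤ 2 * k) : scount m k = 0 := by
  unfold scount
  rw [Finset.card_eq_zero]
  apply Finset.eq_empty_of_forall_notMem
  intro S hS
  rw [Finset.mem_filter, Finset.mem_powersetCard] at hS
  obtain ⟨⟨hsub, hcard⟩, hgood⟩ := hS
  have hk : 1 ≤ k := by omega
  have hne : S.Nonempty := by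
    rw [← Finset.card_pos, hcard]; omega
  set x := S.max' hne with hx
  have hxm : x ∈ S := S.max'_mem hne
  have hfe : S.filter (· < x) = S.erase x := by
    ext y
    simp only [Finset.mem_filter, Finset.mem_erase]
    constructor
    · rintro ⟨hy, hlt⟩; exact ⟨by omega, hy⟩
    · rintro ⟨hne', hy⟩; exact ⟨hy, lt_of_le_of_ne (S.le_max' y hy) hne'⟩
  have h1 := hgood x hxm
  rw [hfe, Finset.card_erase_of_mem hxm, hcard] at h1
  have h2 : x < m := Finset.mem_range.mp (hsub hxm)
  omega

private lemma scount_succ {m k : ℕ} (hk : 1 ≤ k) (h : 2 * (k - 1) ≤ m) :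
    scount (m + 1) k = scount m k + scount m (k - 1) := by
  classical
  set A := ((Finset.range (m + 1)).powersetCard k).filter Good with hA
  have hsplit := Finset.card_filter_add_card_filter_not
    (s := A) (p := fun S => m ∈ S)
  have h1 : A.filter (fun S => ¬ m ∈ S) = ((Finset.range m).powersetCard k).filter Good := by
    ext S
    simp only [hA, Finset.mem_filter, Finset.mem_powersetCard]
    constructor
    · rintro ⟨⟨⟨hsub, hcard⟩, hg⟩, hm⟩
      refine ⟨⟨fun x hx => ?_, hcard⟩, hg⟩
      have := Finset.mem_range.mp (hsub hx)
      have : x ≠ m := fun he => hm (he ▸ hx)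
      rw [Finset.mem_range]; omega
    · rintro ⟨⟨hsub, hcard⟩, hg⟩
      have hm : ¬ m ∈ S := fun hmem => by
        have := Finset.mem_range.mp (hsub hmem); omega
      refine ⟨⟨⟨fun x hx => ?_, hcard⟩, hg⟩, hm⟩
      have := Finset.mem_range.mp (hsub hx)
      rw [Finset.mem_range]; omega
  have h2 : (A.filter (fun S => m ∈ S)).card
      = (((Finset.range m).powersetCard (k - 1)).filter Good).card := by
    apply Finset.card_bij' (i := fun S _ => S.erase m) (j := fun T _ => insert m T)
    case left_inv =>
      intro S hS
      rw [Finset.mem_filter] at hS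
      exact Finset.insert_erase hS.2
    case right_inv =>
      intro T hT
      simp only [Finset.mem_filter, Finset.mem_powersetCard] at hT
      have hmT : ¬ m ∈ T := fun hmem => by
        have := Finset.mem_range.mp (hT.1.1 hmem); omega
      exact Finset.erase_insert hmT
    case hi =>
      intro S hS
      simp only [hA, Finset.mem_filter, Finset.mem_powersetCard] at hS ⊢
      obtain ⟨⟨⟨hsub, hcard⟩, hg⟩, hm⟩ := hS
      refine ⟨⟨fun x hx => ?_, ?_⟩, ?_⟩
      · rw [Finset.mem_erase] at hx
        have := Finset.mem_range.mp (hsub hx.2)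
        rw [Finset.mem_range]; omega
      · rw [Finset.card_erase_of_mem hm, hcard]
      · intro x hx
        have hx' := hx
        rw [Finset.mem_erase] at hx'
        have hxm : x < m := by
          have := Finset.mem_range.mp (hsub hx'.2); omega
        have hfe : (S.erase m).filter (· < x) = S.filter (· < x) := by
          ext y
          simp only [Finset.mem_filter, Finset.mem_erase]
          constructor
          · rintro ⟨⟨_, hy⟩, hlt⟩; exact ⟨hy, hlt⟩
          · rintro ⟨hy, hlt⟩; exact ⟨⟨by omega, hy⟩, hlt⟩
        rw [hfe]
        exact hg x hx'.2
    case hj =>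
      intro T hT
      simp only [hA, Finset.mem_filter, Finset.mem_powersetCard] at hT ⊢
      obtain ⟨⟨hsub, hcard⟩, hg⟩ := hT
      have hmT : ¬ m ∈ T := fun hmem => by
        have := Finset.mem_range.mp (hsub hmem); omega
      have hTlt : ∀ y ∈ T, y < m := fun y hy => Finset.mem_range.mp (hsub hy)
      refine ⟨⟨⟨fun x hx => ?_, ?_⟩, ?_⟩, Finset.mem_insert_self m T⟩
      · rw [Finset.mem_insert] at hx
        rw [Finset.mem_range]
        rcases hx with rfl | hx
        · omega
        · have := hTlt x hx; omega
      · rw [Finset.card_insert_of_notMem hmT, hcard]; omega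
      · intro x hx
        rw [Finset.mem_insert] at hx
        rcases hx with rfl | hx
        · have hfe : (insert x T).filter (· < x) = T := by
            ext y
            simp only [Finset.mem_filter, Finset.mem_insert]
            constructor
            · rintro ⟨rfl | hy, hlt⟩
              · omega
              · exact hy
            · intro hy; exact ⟨Or.inr hy, hTlt y hy⟩
          rw [hfe, hcard]; exact h
        · have hfe : (insert m T).filter (· < x) = T.filter (· < x) := by
            ext y
            simp only [Finset.mem_filter, Finset.mem_insert]
            constructor
            · rintro ⟨rfl | hy, hlt⟩
              · have := hTlt x hx; omega
              · exact ⟨hy, hlt⟩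
            · rintro ⟨hy, hlt⟩; exact ⟨Or.inr hy, hlt⟩
          rw [hfe]
          exact hg x hx
  have hAcard : scount (m + 1) k = A.card := rfl
  rw [hAcard, ← hsplit, h1, h2]
  simp [scount]
  omega

private lemma scount_formula : ∀ m k : ℕ, 2 * k ≤ m + 2 →
    (scount m k : ℤ) = (Nat.choose m k : ℤ) -
      (if 2 ≤ k then (Nat.choose m (k - 2) : ℤ) else 0) := by
  intro m
  induction m with
  | zero =>
    intro k hk
    rw [scount_of_le_one (by omega), if_neg (by omega)]
    ring
  | succ m ih =>
    intro k hk
    by_cases hk1 : k ≤ 1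
    · rw [scount_of_le_one hk1, if_neg (by omega)]; ring
    · push_neg at hk1
      by_cases hb : 2 * k = m + 3
      · rw [scount_eq_zero (by omega), if_pos (by omega)]
        have h1 : Nat.choose (m + 1) (k - 2) = Nat.choose (m + 1) k := by
          have he : k - 2 = (m + 1) - k := by omega
          rw [he, Nat.choose_symm (by omega)]
        rw [h1]
        simp
      · have h2 : 2 * k ≤ m + 2 := by omega
        rw [scount_succ (by omega) (by omega), if_pos (by omega)]
        have e1 := ih k h2
        have e2 := ih (k - 1) (by omega)
        have p1 : Nat.choose (m + 1) k = Nat.choose m (k - 1) + Nat.choose m k := by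
          have hp := Nat.choose_succ_succ m (k - 1)
          simp only [Nat.succ_eq_add_one] at hp
          have he : k - 1 + 1 = k := by omega
          rw [he] at hp
          exact hp
        by_cases hk3 : 3 ≤ k
        · rw [if_pos (by omega)] at e1 e2
          have he2 : k - 1 - 2 = k - 3 := by omega
          rw [he2] at e2
          have p2 : Nat.choose (m + 1) (k - 2) = Nat.choose m (k - 3) + Nat.choose m (k - 2) := by
            have hp := Nat.choose_succ_succ m (k - 3)
            simp only [Nat.succ_eq_add_one] at hp
            have he : k - 3 + 1 = k - 2 := by omega
            rw [he] at hp
            exact hp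
          rw [p1, p2]
          push_cast
          linarith
        · have hk2 : k = 2 := by omega
          subst hk2
          rw [if_pos (by omega)] at e1
          rw [if_neg (by omega)] at e2
          have p2 : Nat.choose (m + 1) 0 = Nat.choose m 0 := by simp
          rw [p1, p2]
          push_cast
          push_cast at e1 e2
          linarith

private lemma filter_image_card {k : ℕ} {b : Fin k → ℕ} (hb : StrictMono b) (i : Fin k) :
    (((Finset.univ.image b)).filter (· < b i)).card = (i : ℕ) := by
  rw [Finset.filter_image]
  rw [Finset.card_image_of_injective _ hb.injective]
  have he : (Finset.univ.filter fun j => b j < b i) = Finset.univ.filter (· < i) := by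
    apply Finset.filter_congr
    intro j _
    simp [hb.lt_iff_lt]
  rw [he]
  have : (Finset.univ.filter (· < i)) = Finset.Iio i := by ext j; simp
  rw [this, Fin.card_Iio]

private lemma card_eq_scount (m k : ℕ) :
    Nat.card {a : Fin k → Fin m //
      StrictMono a ∧ ∀ i : Fin k, 2 * (i : ℕ) ≤ (a i : ℕ)} = scount m k := by
  classical
  have hEquiv : {a : Fin k → Fin m // StrictMono a ∧ ∀ i : Fin k, 2 * (i : ℕ) ≤ (a i : ℕ)} ≃
      {S // S ∈ ((Finset.range m).powersetCard k).filter Good} := by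
    refine Equiv.ofBijective (fun a => ⟨Finset.univ.image (fun i => ((a.1 i : ℕ))), ?_⟩) ⟨?_, ?_⟩
    · obtain ⟨a, ha, h2⟩ := a
      have hb : StrictMono fun i => ((a i : ℕ)) := fun x y hxy => ha hxy
      rw [Finset.mem_filter, Finset.mem_powersetCard]
      refine ⟨⟨?_, ?_⟩, ?_⟩
      · intro x hx
        rw [Finset.mem_image] at hx
        obtain ⟨i, _, rfl⟩ := hx
        exact Finset.mem_range.mpr (a i).2
      · rw [Finset.card_image_of_injective _ hb.injective, Finset.card_univ, Fintype.card_fin]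
      · intro x hx
        rw [Finset.mem_image] at hx
        obtain ⟨i, _, rfl⟩ := hx
        rw [filter_image_card hb i]
        exact h2 i
    · rintro ⟨a, ha, h2⟩ ⟨a', ha', h2'⟩ heq
      simp only [Subtype.mk_eq_mk] at heq ⊢
      have hb : StrictMono fun i => ((a i : ℕ)) := fun x y hxy => ha hxy
      have hb' : StrictMono fun i => ((a' i : ℕ)) := fun x y hxy => ha' hxy
      have hcard : (Finset.univ.image fun i => ((a i : ℕ))).card = k := by
        rw [Finset.card_image_of_injective _ hb.injective, Finset.card_univ, Fintype.card_fin]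
      have hu1 := Finset.orderEmbOfFin_unique hcard
        (f := fun i => ((a i : ℕ)))
        (fun x => Finset.mem_image_of_mem _ (Finset.mem_univ x)) hb
      have hu2 := Finset.orderEmbOfFin_unique hcard
        (f := fun i => ((a' i : ℕ)))
        (fun x => heq ▸ Finset.mem_image_of_mem _ (Finset.mem_univ x)) hb'
      funext i
      have : ((a i : ℕ)) = ((a' i : ℕ)) := by
        rw [congrFun hu1 i, congrFun hu2 i]
      exact Fin.ext this
    · rintro ⟨S, hS⟩
      rw [Finset.mem_filter, Finset.mem_powersetCard] at hS
      obtain ⟨⟨hsub, hcard⟩, hgood⟩ := hS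
      have hmem : ∀ i : Fin k, S.orderEmbOfFin hcard i < m := fun i =>
        Finset.mem_range.mp (hsub (Finset.orderEmbOfFin_mem S hcard i))
      refine ⟨⟨fun i => ⟨S.orderEmbOfFin hcard i, hmem i⟩, ?_, ?_⟩, ?_⟩
      · intro x y hxy
        exact (S.orderEmbOfFin hcard).strictMono hxy
      · intro i
        have hS_eq : Finset.univ.image (fun i => S.orderEmbOfFin hcard i) = S := by
          apply Finset.coe_injective
          rw [Finset.coe_image, Finset.coe_univ, Set.image_univ]
          exact Finset.range_orderEmbOfFin S hcard
        have hfc := filter_image_card (S.orderEmbOfFin hcard).strictMono i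
        rw [hS_eq] at hfc
        have := hgood (S.orderEmbOfFin hcard i) (Finset.orderEmbOfFin_mem S hcard i)
        simp only [hfc] at this
        exact this
      · apply Subtype.ext
        simp only
        apply Finset.coe_injective
        rw [Finset.coe_image, Finset.coe_univ, Set.image_univ]
        exact Finset.range_orderEmbOfFin S hcard
  rw [Nat.card_congr hEquiv, Nat.card_eq_fintype_card, Fintype.card_coe]
  rfl

/-- The number of single-column symplectic tableaux of length `k ≤ n` on the ordered
alphabet `1 < 1̄ < 2 < 2̄ < … < n < n̄` (encoded as `Fin (2n)`): strictly increasing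
sequences `a : Fin k → Fin (2n)` with the `i`-th entry at least the `i`-th letter, i.e.
`(a i : ℕ) ≥ 2i`, equals `C(2n, k) − C(2n, k−2)` (with `C(2n, k−2) = 0` for `k < 2`),
the dimension of the `k`-th fundamental representation of `Sp_{2n}(ℂ)`. -/
theorem single_column_symplectic_tableaux_count (n k : ℕ) (hk : k ≤ n) :
    (Nat.card {a : Fin k → Fin (2 * n) //
        StrictMono a ∧ ∀ i : Fin k, 2 * (i : ℕ) ≤ (a i : ℕ)} : ℤ) =
      (Nat.choose (2 * n) k : ℤ) -
        (if 2 ≤ k then (Nat.choose (2 * n) (k - 2) : ℤ) else 0) := by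
  rw [card_eq_scount (2 * n) k]
  exact scount_formula (2 * n) k (by omega)
end

section
/- In the symplectic Schur module construction, applying an alternating relation or an exchange relation to a symplectic relation S_F = Σ_i (F_i − F_i') yields a linear combination of symplectic relations; hence the span of the symplectic relations in the tensor power T^r(ℂ^{2n}) descends to a well-defined subspace of the GL Schur module E^λ, and the quotient E^{λ,f} is well defined. -/
open PiTensorProduct
open scoped TensorProduct

/-!
A place permutation `σ` sends the symplectic relation `S_F` with erased boxes `p, q` to the
symplectic relation of the permuted filling `F ∘ σ⁻¹` with erased boxes `σ p, σ q`, so it maps the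
generating set of the span into itself; applying the same to `σ⁻¹` gives equality.
-/

theorem Submodule.map_equiv_eq_of_le {R M : Type*} [Semiring R] [AddCommMonoid M] [Module R M]
    {e : M ≃ₗ[R] M} {p : Submodule R M} (h : p.map (e : M →ₗ[R] M) ≤ p)
    (h_symm : p.map (e.symm : M →ₗ[R] M) ≤ p) : p.map (e : M →ₗ[R] M) = p :=
  le_antisymm h fun _ hx => (mem_map_equiv ..).2 (h_symm (mem_map_of_mem hx))

namespace Symplectic

variable (R : Type*) [CommRing R] {κ : Type*} [Fintype κ] [DecidableEq κ]
  {ι ι' : Type*} [DecidableEq ι] [DecidableEq ι']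

/-- `S_F` for the filling `v` with erased boxes `p, q`; the basis vectors `e_i, e_ī` are
`Pi.single (Sum.inl i) 1` and `Pi.single (Sum.inr i) 1`. -/
noncomputable def relation (v : ι → (κ ⊕ κ → R)) (p q : ι) : ⨂[R] _ : ι, (κ ⊕ κ → R) :=
  ∑ i : κ,
    (tprod R (Function.update (Function.update v p (Pi.single (Sum.inl i) 1)) q
        (Pi.single (Sum.inr i) 1))
      - tprod R (Function.update (Function.update v p (Pi.single (Sum.inr i) 1)) q
        (Pi.single (Sum.inl i) 1)))

def relations : Set (⨂[R] _ : ι, (κ ⊕ κ → R)) :=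
  {x | ∃ (v : ι → (κ ⊕ κ → R)) (p q : ι), p ≠ q ∧ x = relation R v p q}

variable {R}

theorem update_update_comp_equiv {α : Type*} (v : ι → α) (e : ι ≃ ι') (p q : ι) (a b : α) :
    Function.update (Function.update v p a) q b ∘ e.symm =
      Function.update (Function.update (v ∘ e.symm) (e p) a) (e q) b := by
  simp only [Function.update_comp_equiv, Equiv.symm_symm]

theorem reindex_relation (e : ι ≃ ι') (v : ι → (κ ⊕ κ → R)) (p q : ι) :
    reindex R (fun _ => κ ⊕ κ → R) e (relation R v p q) = relation R (v ∘ e.symm) (e p) (e q) := by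
  simp only [relation, map_sum, map_sub, reindex_tprod, ← update_update_comp_equiv]
  rfl

theorem map_reindex_span_relations_le (e : ι ≃ ι') :
    (Submodule.span R (relations R (κ := κ) (ι := ι))).map
        (reindex R (fun _ => κ ⊕ κ → R) e).toLinearMap ≤
      Submodule.span R (relations R) := by
  rw [Submodule.map_span]
  refine Submodule.span_mono ?_
  rintro _ ⟨_, ⟨v, p, q, hpq, rfl⟩, rfl⟩
  exact ⟨v ∘ e.symm, e p, e q, e.injective.ne hpq, reindex_relation e v p q⟩

end Symplectic

/-- Applying an alternating relation or an exchange relation to a symplectic relation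
`S_F = Σ_i (F_i − F_i')` yields a linear combination of symplectic relations. Since the
alternating and exchange operations are (signed sums of) place permutations of the
tensor factors, this is the statement that the span of the symplectic relations in
`T^r(ℂ^{2n})` is stable under every place permutation of the factors; hence it descends
to a well-defined subspace of the GL Schur module `E^λ`, and the symplectic Schur
module `E^{λ,f}` is well defined. -/
theorem symplectic_relations_stable_under_place_permutations (n r : ℕ)
    (SymSpan : Submodule ℂ (⨂[ℂ] (_ : Fin r), ((Fin n ⊕ Fin n) → ℂ)))
    (hSym : SymSpan = Submodule.span ℂ
      {x | ∃ (v : Fin r → ((Fin n ⊕ Fin n) → ℂ)) (p q : Fin r), p ≠ q ∧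
        x = ∑ i : Fin n,
          (tprod ℂ (Function.update (Function.update v p
              (Pi.single (Sum.inl i) 1)) q (Pi.single (Sum.inr i) 1))
           - tprod ℂ (Function.update (Function.update v p
              (Pi.single (Sum.inr i) 1)) q (Pi.single (Sum.inl i) 1)))}) :
    ∀ σ : Equiv.Perm (Fin r),
      Submodule.map
        (PiTensorProduct.reindex ℂ (fun _ : Fin r => (Fin n ⊕ Fin n) → ℂ) σ).toLinearMap
        SymSpan = SymSpan := by
  intro σ
  change SymSpan = Submodule.span ℂ (Symplectic.relations ℂ) at hSym
  subst hSym
  refine Submodule.map_equiv_eq_of_le (Symplectic.map_reindex_span_relations_le σ) ?_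
  rw [reindex_symm]
  exact Symplectic.map_reindex_span_relations_le σ.symm
end
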